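/- Let μ be a measure, 0 < p < 2, and let F, h be measurable complex-valued functions such that ∫ |F|^p dμ < ∞, ∫ |F|^{p-2}|h|² dμ < ∞, and μ({F = 0}) = 0. If ∫ |F + t·h|^p dμ ≥ ∫ |F|^p dμ for all t ∈ ℂ, then ∫ |F|^{p-2}·conj(F)·h dμ = 0. -/

import Mathlib

open MeasureTheory

/-!
At a point where `F ≠ 0`, Bernoulli's inequality for the concave power `p / 2 ≤ 1` gives the
second-order bound
`‖F + t h‖ ^ p ≤ ‖F‖ ^ p + p Re (t ‖F‖ ^ (p - 2) conj F h) + (p / 2) ‖t‖ ^ 2 ‖F‖ ^ (p - 2) ‖h‖ ^ 2`.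
Integrating and using minimality, `0 ≤ Re (t G) + C ‖t‖ ^ 2` for every `t : ℂ`, where `G` is the
integral in question; the choice `t = -s conj G` with `s` small forces `G = 0`.
The integrand of `G` is integrable since `s ^ (p - 2) s y ≤ s ^ p + s ^ (p - 2) y ^ 2`.
-/

theorem Complex.norm_add_rpow_le {p : ℝ} (hp0 : 0 ≤ p) (hp2 : p ≤ 2) {a : ℂ} (ha : a ≠ 0)
    (b : ℂ) :
    ‖a + b‖ ^ p ≤ ‖a‖ ^ p + p * (‖a‖ ^ (p - 2) * (starRingEnd ℂ a * b).re)
      + p / 2 * (‖a‖ ^ (p - 2) * ‖b‖ ^ 2) := by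
  set r := ‖a‖
  have hr : 0 < r := norm_pos_iff.mpr ha
  set D := 2 * (starRingEnd ℂ a * b).re + ‖b‖ ^ 2
  have hsq : ‖a + b‖ ^ 2 = r ^ 2 * (1 + D / r ^ 2) := by
    rw [mul_add, mul_one, mul_div_cancel₀ _ (by positivity)]
    simp only [r, D, Complex.sq_norm, Complex.normSq_add, Complex.mul_re, Complex.conj_re,
      Complex.conj_im]
    ring
  have hD : -1 ≤ D / r ^ 2 := by
    rw [le_div_iff₀ (by positivity)]
    nlinarith [hsq ▸ sq_nonneg ‖a + b‖, div_mul_cancel₀ D (pow_pos hr 2).ne']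
  have hrpow_sq (x : ℝ) (hx : 0 ≤ x) : x ^ p = (x ^ 2) ^ (p / 2) := by
    rw [← Real.rpow_natCast, ← Real.rpow_mul hx]; ring_nf
  calc ‖a + b‖ ^ p = r ^ p * (1 + D / r ^ 2) ^ (p / 2) := by
        rw [hrpow_sq _ (norm_nonneg _), hsq, Real.mul_rpow (by positivity) (by linarith),
          ← hrpow_sq _ hr.le]
    _ ≤ r ^ p * (1 + p / 2 * (D / r ^ 2)) := by
        gcongr
        exact rpow_one_add_le_one_add_mul_self hD (by linarith) (by linarith)
    _ = _ := by
        rw [Real.rpow_sub hr, Real.rpow_two]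
        field_simp
        ring

theorem Complex.norm_add_mul_rpow_le {p : ℝ} (hp0 : 0 ≤ p) (hp2 : p ≤ 2) {a : ℂ} (ha : a ≠ 0)
    (t b : ℂ) :
    ‖a + t * b‖ ^ p ≤ ‖a‖ ^ p + p * (t * (((‖a‖ ^ (p - 2) : ℝ) : ℂ) * starRingEnd ℂ a * b)).re
      + p / 2 * ‖t‖ ^ 2 * (‖a‖ ^ (p - 2) * ‖b‖ ^ 2) := by
  refine (norm_add_rpow_le hp0 hp2 ha (t * b)).trans_eq ?_
  rw [show t * (((‖a‖ ^ (p - 2) : ℝ) : ℂ) * starRingEnd ℂ a * b)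
      = ((‖a‖ ^ (p - 2) : ℝ) : ℂ) * (starRingEnd ℂ a * (t * b)) by ring,
    re_ofReal_mul, norm_mul, mul_pow]
  ring

theorem Real.rpow_sub_two_mul_mul_le {s : ℝ} (hs : 0 < s) (p y : ℝ) :
    s ^ (p - 2) * (s * y) ≤ s ^ p + s ^ (p - 2) * y ^ 2 := by
  have hsy : s * y ≤ s ^ 2 + y ^ 2 := by nlinarith [sq_nonneg (s - y), sq_nonneg y]
  calc s ^ (p - 2) * (s * y) ≤ s ^ (p - 2) * (s ^ 2 + y ^ 2) := by gcongr
    _ = s ^ p + s ^ (p - 2) * y ^ 2 := by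
        rw [mul_add, ← Real.rpow_natCast, ← Real.rpow_add hs]; norm_num

theorem Complex.eq_zero_of_forall_re_mul_add_sq_nonneg {z : ℂ} {C : ℝ}
    (h : ∀ t : ℂ, 0 ≤ (t * z).re + C * ‖t‖ ^ 2) : z = 0 := by
  set s : ℝ := 1 / (|C| + 1)
  have hs : 0 < s := by positivity
  have hsC : s * C < 1 := by
    rw [div_mul_eq_mul_div, one_mul, div_lt_one (by positivity)]
    linarith [le_abs_self C]
  have hre : (-(s : ℂ) * starRingEnd ℂ z * z).re = -s * ‖z‖ ^ 2 := by
    rw [mul_assoc, Complex.conj_mul', ← Complex.ofReal_pow, ← Complex.ofReal_neg,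
      ← Complex.ofReal_mul, Complex.ofReal_re]
  have hnorm : ‖-(s : ℂ) * starRingEnd ℂ z‖ ^ 2 = s ^ 2 * ‖z‖ ^ 2 := by
    rw [norm_mul, norm_neg, Complex.norm_conj, Complex.norm_real, Real.norm_of_nonneg hs.le]
    ring
  have key := h (-(s : ℂ) * starRingEnd ℂ z)
  rw [hre, hnorm] at key
  have : ‖z‖ ^ 2 ≤ 0 := by nlinarith [mul_pos hs (sub_pos.mpr hsC)]
  simpa using this

section FirstVariation

variable {α : Type*} [MeasurableSpace α] {μ : Measure α} {p : ℝ} {F h : α → ℂ}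

theorem integrable_rpow_sub_two_mul_conj_mul (hFm : AEMeasurable F μ)
    (hhm : AEMeasurable h μ) (hFp : Integrable (fun x => ‖F x‖ ^ p) μ)
    (hw : Integrable (fun x => ‖F x‖ ^ (p - 2) * ‖h x‖ ^ 2) μ) (hF0 : ∀ᵐ x ∂μ, F x ≠ 0) :
    Integrable (fun x => ((‖F x‖ ^ (p - 2) : ℝ) : ℂ) * starRingEnd ℂ (F x) * h x) μ := by
  refine (hFp.add hw).mono' (by fun_prop : AEMeasurable _ μ).aestronglyMeasurable ?_
  filter_upwards [hF0] with x hx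
  rw [norm_mul, norm_mul, Complex.norm_real, Complex.norm_conj,
    Real.norm_of_nonneg (by positivity), mul_assoc]
  exact Real.rpow_sub_two_mul_mul_le (norm_pos_iff.mpr hx) p _

theorem re_mul_integral_add_nonneg_of_lintegral_rpow_le (hp0 : 0 < p) (hp2 : p ≤ 2)
    (hFm : AEMeasurable F μ) (hhm : AEMeasurable h μ)
    (hFp : Integrable (fun x => ‖F x‖ ^ p) μ)
    (hw : Integrable (fun x => ‖F x‖ ^ (p - 2) * ‖h x‖ ^ 2) μ) (hF0 : ∀ᵐ x ∂μ, F x ≠ 0)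
    (t : ℂ) (hmin : ∫⁻ x, ENNReal.ofReal (‖F x‖ ^ p) ∂μ
        ≤ ∫⁻ x, ENNReal.ofReal (‖F x + t * h x‖ ^ p) ∂μ) :
    0 ≤ (t * ∫ x, ((‖F x‖ ^ (p - 2) : ℝ) : ℂ) * starRingEnd ℂ (F x) * h x ∂μ).re
      + (∫ x, ‖F x‖ ^ (p - 2) * ‖h x‖ ^ 2 ∂μ) / 2 * ‖t‖ ^ 2 := by
  set f := fun x => ((‖F x‖ ^ (p - 2) : ℝ) : ℂ) * starRingEnd ℂ (F x) * h x
  set w := fun x => ‖F x‖ ^ (p - 2) * ‖h x‖ ^ 2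
  have hf : Integrable (fun x => t * f x) μ :=
    (integrable_rpow_sub_two_mul_conj_mul hFm hhm hFp hw hF0).const_mul t
  have hre : Integrable (fun x => (t * f x).re) μ := hf.re
  set g := fun x => ‖F x‖ ^ p + p * (t * f x).re + p / 2 * ‖t‖ ^ 2 * w x
  have hlin : Integrable (fun x => ‖F x‖ ^ p + p * (t * f x).re) μ := hFp.add (hre.const_mul p)
  have hg : Integrable g μ := hlin.add (hw.const_mul _)
  have hbound : ∀ᵐ x ∂μ, ‖F x + t * h x‖ ^ p ≤ g x := by
    filter_upwards [hF0] with x hx using Complex.norm_add_mul_rpow_le hp0.le hp2 hx t (h x)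
  have hg0 : 0 ≤ᵐ[μ] g := hbound.mono fun x hx => (by positivity : (0 : ℝ) ≤ _).trans hx
  have hle : ∫ x, ‖F x‖ ^ p ∂μ ≤ ∫ x, g x ∂μ := by
    rw [← ENNReal.ofReal_le_ofReal_iff (integral_nonneg_of_ae hg0),
      ofReal_integral_eq_lintegral_ofReal hFp (ae_of_all _ fun x => by positivity),
      ofReal_integral_eq_lintegral_ofReal hg hg0]
    exact hmin.trans (lintegral_mono_ae (hbound.mono fun x hx => ENNReal.ofReal_le_ofReal hx))
  have hsplit : ∫ x, g x ∂μ = ∫ x, ‖F x‖ ^ p ∂μ + p * (t * ∫ x, f x ∂μ).re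
      + p / 2 * ‖t‖ ^ 2 * ∫ x, w x ∂μ := by
    have hre_integral : ∫ x, (t * f x).re ∂μ = (t * ∫ x, f x ∂μ).re := by
      rw [← integral_const_mul]
      exact integral_re hf
    simp only [g]
    rw [integral_add hlin (hw.const_mul _),
      integral_add hFp (hre.const_mul p), integral_const_mul, integral_const_mul,
      hre_integral]
  nlinarith

end FirstVariation

theorem stmt_6 {α : Type*} [MeasurableSpace α] (μ : Measure α) (p : ℝ)
    (hp0 : 0 < p) (hp2 : p < 2) (F h : α → ℂ) (hFm : Measurable F) (hhm : Measurable h)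
    (hFp : ∫⁻ x, ENNReal.ofReal (‖F x‖ ^ p) ∂μ < ⊤)
    (hh2 : ∫⁻ x, ENNReal.ofReal (‖F x‖ ^ (p - 2) * ‖h x‖ ^ 2) ∂μ < ⊤)
    (hF0 : μ {x | F x = 0} = 0)
    (hmin : ∀ t : ℂ,
      ∫⁻ x, ENNReal.ofReal (‖F x‖ ^ p) ∂μ
        ≤ ∫⁻ x, ENNReal.ofReal (‖F x + t * h x‖ ^ p) ∂μ) :
    ∫ x, ((‖F x‖ ^ (p - 2) : ℝ) : ℂ) * (starRingEnd ℂ) (F x) * h x ∂μ = 0 := by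
  have hFp' : Integrable (fun x => ‖F x‖ ^ p) μ :=
    (lintegral_ofReal_ne_top_iff_integrable (by fun_prop : Measurable _).aestronglyMeasurable
      (ae_of_all _ fun _ => by positivity)).mp hFp.ne
  have hh2' : Integrable (fun x => ‖F x‖ ^ (p - 2) * ‖h x‖ ^ 2) μ :=
    (lintegral_ofReal_ne_top_iff_integrable (by fun_prop : Measurable _).aestronglyMeasurable
      (ae_of_all _ fun _ => by positivity)).mp hh2.ne
  exact Complex.eq_zero_of_forall_re_mul_add_sq_nonneg fun t =>
    re_mul_integral_add_nonneg_of_lintegral_rpow_le hp0 hp2.le hFm.aemeasurable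
      hhm.aemeasurable hFp' hh2' (measure_eq_zero_iff_ae_notMem.mp hF0) t (hmin t)
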